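/- The map sending a rooted Cayley tree t on vertices labeled {0,1,...,n} (rooted at 0) to the vector (r(1,t),...,r(n,t)), where r(i,t) is the breadth-first-search rank of the parent of the vertex labeled i (with children ordered by increasing label), is a bijection onto the set of parking functions of size n. -/

import Mathlib

open Finset

/-- A rooted Cayley tree on the vertices `{0, 1, …, n}`, rooted at `0`, encoded by its
parent function: every vertex eventually reaches the root by iterating the parent map. -/
structure CayleyTree (n : ℕ) where
  par : Fin (n + 1) → Fin (n + 1)
  par_root : par 0 = 0
  reach : ∀ v, ∃ m, par^[m] v = 0

namespace CayleyTree

variable {n : ℕ} (t : CayleyTree n)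

/-- The depth of a vertex: the least `m` with `par^[m] v = 0`. -/
noncomputable def depth (v : Fin (n + 1)) : ℕ := sInf {m | t.par^[m] v = 0}

/-- The path from the root to `v` (the list of labels of the ancestors of `v`,
starting at the root and ending at `v`). -/
noncomputable def path (v : Fin (n + 1)) : List (Fin (n + 1)) :=
  (List.range (t.depth v + 1)).map fun j => t.par^[t.depth v - j] v

/-- The rank of a vertex for the breadth first search in which the children of each
vertex are ordered by increasing label: vertices are visited by increasing depth, and,
within a level, in lexicographic order of their root-to-vertex paths (the root has
rank `1`). -/
noncomputable def bfsRank (v : Fin (n + 1)) : ℕ :=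
  1 + Nat.card {u : Fin (n + 1) //
    t.depth u < t.depth v ∨ (t.depth u = t.depth v ∧ List.Lex (· < ·) (t.path u) (t.path v))}

end CayleyTree

/-- `f : Fin n → ℕ` is a parking function of size `n` with values in `{1,…,n}`:
for each `a ∈ {1,…,n}`, at least `a` of its values are `≤ a` (equivalently, its
nondecreasing rearrangement `f'` satisfies `f' i ≤ i`). -/
def IsParkingFun (n : ℕ) (f : Fin n → ℕ) : Prop :=
  (∀ j, f j ∈ Finset.Icc 1 n) ∧
    ∀ a ∈ Finset.Icc 1 n, a ≤ (Finset.univ.filter fun j => f j ≤ a).card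

/-!
The breadth first search order has a recursive description: the root comes first, and two
other vertices are compared by their parents, siblings by their labels (`IsBFSOrder`). By
induction on depth, any two orders with this description agree. Hence the ranks of all
vertices are determined by the ranks of their parents, i.e. by the code of the tree, which
gives injectivity. The code is a parking function because the `a` non-root vertices of rank
at most `a` all have parents of rank less than `a`. Conversely, given a parking function `f`,
put the root first and the vertices `i ≥ 1` after it in lexicographic order of `(f i, i)`, and
let the parent of `i` be the vertex of rank `f i - 1`; the parking condition makes this rank
smaller than that of `i`, so this is a tree, and the order satisfies the recursive
description, so it is the breadth first search order of that tree.
-/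

section RankBy

variable {α β : Type*} [Fintype α] [LinearOrder β]

def rankBy (key : α → β) (a : α) : ℕ := #{b | key b < key a}

variable {key : α → β}

theorem rankBy_le_rankBy {a b : α} (h : key a ≤ key b) : rankBy key a ≤ rankBy key b :=
  card_le_card fun c hc => by
    simp only [mem_filter, mem_univ, true_and] at hc ⊢; exact hc.trans_le h

theorem rankBy_lt_rankBy {a b : α} (h : key a < key b) : rankBy key a < rankBy key b :=
  card_lt_card <| (ssubset_iff_of_subset fun c hc => by
      simp only [mem_filter, mem_univ, true_and] at hc ⊢; exact hc.trans h).2 ⟨a, by simp [h]⟩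

theorem rankBy_lt_rankBy_iff {a b : α} : rankBy key a < rankBy key b ↔ key a < key b :=
  ⟨fun h => lt_of_not_ge fun h' => (rankBy_le_rankBy h').not_gt h, rankBy_lt_rankBy⟩

theorem rankBy_injective (hkey : Function.Injective key) : Function.Injective (rankBy key) :=
  fun _ _ h => hkey <| le_antisymm (not_lt.1 fun hlt => (rankBy_lt_rankBy hlt).ne' h)
    (not_lt.1 fun hlt => (rankBy_lt_rankBy hlt).ne h)

theorem rankBy_lt_card (a : α) : rankBy key a < Fintype.card α :=
  card_lt_card <| filter_ssubset.2 ⟨a, mem_univ a, lt_irrefl _⟩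

theorem exists_rankBy_eq (hkey : Function.Injective key) {k : ℕ} (hk : k < Fintype.card α) :
    ∃ a, rankBy key a = k := by
  let g : α → Fin (Fintype.card α) := fun a => ⟨rankBy key a, rankBy_lt_card a⟩
  have hg : Function.Bijective g := (Fintype.bijective_iff_injective_and_card g).2
    ⟨fun a b h => rankBy_injective hkey (Fin.val_eq_of_eq h), Fintype.card_fin _ |>.symm⟩
  obtain ⟨a, ha⟩ := hg.2 ⟨k, hk⟩
  exact ⟨a, congrArg Fin.val ha⟩

theorem card_filter_rankBy_lt (hkey : Function.Injective key) {k : ℕ}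
    (hk : k ≤ Fintype.card α) : #{a | rankBy key a < k} = k := by
  have himage : image (rankBy key) {a | rankBy key a < k} = range k := by
    ext m
    simp only [mem_image, mem_filter, mem_univ, true_and, mem_range]
    refine ⟨fun ⟨a, ha, hm⟩ => hm ▸ ha, fun hm => ?_⟩
    obtain ⟨a, rfl⟩ := exists_rankBy_eq hkey (hm.trans_le hk)
    exact ⟨a, hm, rfl⟩
  rw [← card_image_of_injective _ (rankBy_injective hkey), himage, card_range]

theorem rankBy_congr {γ : Type*} [LinearOrder γ] {key' : α → γ}
    (h : ∀ a b, key a < key b ↔ key' a < key' b) : rankBy key = rankBy key' :=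
  funext fun a => congrArg card <| filter_congr fun b _ => h b a

end RankBy

theorem toLex_lt_toLex_congr {β γ δ : Type*} [LinearOrder β] [LinearOrder γ] [LT δ]
    {a b : β} {a' b' : γ} (h₁ : a < b ↔ a' < b') (h₂ : b < a ↔ b' < a') (x y : δ) :
    toLex (a, x) < toLex (b, y) ↔ toLex (a', x) < toLex (b', y) := by
  have heq : a = b ↔ a' = b' := by
    rw [le_antisymm_iff, le_antisymm_iff, ← not_lt, ← not_lt, ← not_lt, ← not_lt, h₁, h₂]
  simp only [Prod.Lex.toLex_lt_toLex, h₁, heq]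

theorem List.lex_append_singleton_iff {α : Type*} (r : α → α → Prop) {p q : List α}
    (h : p.length = q.length) (a b : α) :
    List.Lex r (p ++ [a]) (q ++ [b]) ↔ List.Lex r p q ∨ p = q ∧ r a b := by
  induction p generalizing q with
  | nil => cases q <;> simp_all [List.cons_lex_cons_iff]
  | cons x p ih =>
    cases q with
    | nil => simp at h
    | cons y q =>
      simp only [List.cons_append, List.cons_lex_cons_iff, ih (Nat.succ_injective h),
        List.cons.injEq]
      tauto

theorem Function.exists_iterate_eq_of_lt {α : Type*} {p : α → α} {a : α} (ρ : α → ℕ)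
    (h : ∀ v, v ≠ a → ρ (p v) < ρ v) (v : α) : ∃ m, p^[m] v = a := by
  induction hv : ρ v using Nat.strong_induction_on generalizing v with
  | _ k ih =>
    by_cases hva : v = a
    · exact ⟨0, hva⟩
    · obtain ⟨m, hm⟩ := ih _ (hv ▸ h v hva) (p v) rfl
      exact ⟨m + 1, hm⟩

namespace CayleyTree

variable {n : ℕ} (t : CayleyTree n)

theorem ext {t t' : CayleyTree n} (h : t.par = t'.par) : t = t' := by
  cases t; cases t'; cases h; rfl

theorem iterate_depth (v : Fin (n + 1)) : t.par^[t.depth v] v = 0 := Nat.sInf_mem (t.reach v)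

theorem depth_eq_zero_iff {v : Fin (n + 1)} : t.depth v = 0 ↔ v = 0 :=
  ⟨fun h => by simpa [h] using t.iterate_depth v,
    fun h => Nat.eq_zero_of_le_zero (Nat.sInf_le (by simp [h]))⟩

theorem depth_par {v : Fin (n + 1)} (hv : v ≠ 0) : t.depth v = t.depth (t.par v) + 1 := by
  have hpos : t.depth v ≠ 0 := mt t.depth_eq_zero_iff.1 hv
  have hle : t.depth v ≤ t.depth (t.par v) + 1 :=
    Nat.sInf_le (t.iterate_depth (t.par v))
  have hge : t.depth (t.par v) ≤ t.depth v - 1 := by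
    refine Nat.sInf_le ?_
    rw [Set.mem_ofPred_eq, ← Function.iterate_succ_apply, Nat.succ_eq_add_one,
      Nat.sub_add_cancel (Nat.pos_of_ne_zero hpos)]
    exact t.iterate_depth v
  omega

theorem path_eq_append (v : Fin (n + 1)) :
    t.path v = (List.range (t.depth v)).map (fun j => t.par^[t.depth v - j] v) ++ [v] := by
  simp [path, List.range_succ]

theorem path_injective : Function.Injective t.path := fun u v h => by
  rw [t.path_eq_append u, t.path_eq_append v] at h
  simpa using congrArg List.getLast? h

theorem length_path (v : Fin (n + 1)) : (t.path v).length = t.depth v + 1 := by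
  simp [path]

theorem path_par {v : Fin (n + 1)} (hv : v ≠ 0) : t.path v = t.path (t.par v) ++ [v] := by
  rw [t.path_eq_append v, t.depth_par hv, path]
  congr 1
  refine List.map_congr_left fun j hj => ?_
  rw [List.mem_range] at hj
  rw [show t.depth (t.par v) + 1 - j = t.depth (t.par v) - j + 1 by omega,
    Function.iterate_succ_apply]

noncomputable def bfsKey (v : Fin (n + 1)) : ℕ ×ₗ List (Fin (n + 1)) :=
  toLex (t.depth v, t.path v)

noncomputable def rank : Fin (n + 1) → ℕ := rankBy t.bfsKey

theorem bfsRank_eq_rank_add_one (v : Fin (n + 1)) : t.bfsRank v = t.rank v + 1 := by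
  rw [bfsRank, rank, rankBy, add_comm, Nat.card_eq_fintype_card, Fintype.card_subtype]
  congr 2
  ext u
  simp only [mem_filter, bfsKey, Prod.Lex.toLex_lt_toLex]
  rfl

theorem bfsKey_injective : Function.Injective t.bfsKey := fun _ _ h =>
  t.path_injective (congrArg (fun k => (ofLex k).2) h)

theorem bfsKey_lt_bfsKey_iff {u v : Fin (n + 1)} (hu : u ≠ 0) (hv : v ≠ 0) :
    t.bfsKey u < t.bfsKey v ↔
      toLex (t.bfsKey (t.par u), u) < toLex (t.bfsKey (t.par v), v) := by
  simp only [bfsKey, Prod.Lex.toLex_lt_toLex, t.depth_par hu, t.depth_par hv, t.path_par hu,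
    t.path_par hv, add_lt_add_iff_right, add_left_inj, EmbeddingLike.apply_eq_iff_eq,
    Prod.mk.injEq]
  by_cases hd : t.depth (t.par u) = t.depth (t.par v)
  · simp only [hd, lt_irrefl, true_and, false_or]
    exact List.lex_append_singleton_iff _ (by simp [length_path, hd]) u v
  · simp [hd]

theorem bfsKey_par_lt {v : Fin (n + 1)} (hv : v ≠ 0) : t.bfsKey (t.par v) < t.bfsKey v :=
  Prod.Lex.toLex_lt_toLex.2 <| Or.inl <| by rw [t.depth_par hv]; exact Nat.lt_succ_self _

theorem bfsKey_zero_lt {v : Fin (n + 1)} (hv : v ≠ 0) : t.bfsKey 0 < t.bfsKey v :=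
  Prod.Lex.toLex_lt_toLex.2 <| Or.inl <| by
    rw [t.depth_eq_zero_iff.2 rfl]; exact Nat.pos_of_ne_zero (mt t.depth_eq_zero_iff.1 hv)

theorem rank_lt_rank_iff {u v : Fin (n + 1)} : t.rank u < t.rank v ↔ t.bfsKey u < t.bfsKey v :=
  rankBy_lt_rankBy_iff

theorem rank_injective : Function.Injective t.rank := rankBy_injective t.bfsKey_injective

theorem rank_lt (v : Fin (n + 1)) : t.rank v < n + 1 :=
  Fintype.card_fin (n + 1) ▸ rankBy_lt_card v

theorem rank_par_lt {v : Fin (n + 1)} (hv : v ≠ 0) : t.rank (t.par v) < t.rank v :=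
  t.rank_lt_rank_iff.2 (t.bfsKey_par_lt hv)

structure IsBFSOrder {β : Type*} [LinearOrder β] (κ : Fin (n + 1) → β) : Prop where
  zero_lt : ∀ v, v ≠ 0 → κ 0 < κ v
  lt_iff : ∀ u v, u ≠ 0 → v ≠ 0 →
    (κ u < κ v ↔ toLex (κ (t.par u), u) < toLex (κ (t.par v), v))

section IsBFSOrder

variable {t} {β γ : Type*} [LinearOrder β] [LinearOrder γ] {κ : Fin (n + 1) → β}
  {κ' : Fin (n + 1) → γ}

theorem isBFSOrder_bfsKey : t.IsBFSOrder t.bfsKey :=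
  ⟨fun _ => t.bfsKey_zero_lt, fun _ _ => t.bfsKey_lt_bfsKey_iff⟩

theorem IsBFSOrder.congr (hκ : t.IsBFSOrder κ) (h : ∀ u v, κ u < κ v ↔ κ' u < κ' v) :
    t.IsBFSOrder κ' where
  zero_lt v hv := (h 0 v).1 (hκ.zero_lt v hv)
  lt_iff u v hu hv := by
    rw [← h, hκ.lt_iff u v hu hv]
    exact toLex_lt_toLex_congr (h _ _) (h _ _) u v

theorem isBFSOrder_rank : t.IsBFSOrder t.rank :=
  isBFSOrder_bfsKey.congr fun _ _ => t.rank_lt_rank_iff.symm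

theorem IsBFSOrder.lt_iff_lt_of_ne_zero {t' : CayleyTree n} (hκ : t.IsBFSOrder κ)
    (hκ' : t'.IsBFSOrder κ') {u v : Fin (n + 1)}
    (h : u ≠ 0 → v ≠ 0 → (κ u < κ v ↔ κ' u < κ' v)) : κ u < κ v ↔ κ' u < κ' v := by
  rcases eq_or_ne u 0 with rfl | hu <;> rcases eq_or_ne v 0 with rfl | hv
  · simp
  · simp [hκ.zero_lt v hv, hκ'.zero_lt v hv]
  · simp [(hκ.zero_lt u hu).asymm, (hκ'.zero_lt u hu).asymm]
  · exact h hu hv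

theorem IsBFSOrder.lt_iff_lt (hκ : t.IsBFSOrder κ) (hκ' : t.IsBFSOrder κ') (u v : Fin (n + 1)) :
    κ u < κ v ↔ κ' u < κ' v := by
  induction hN : t.depth u + t.depth v using Nat.strong_induction_on generalizing u v with
  | _ N ih =>
    refine hκ.lt_iff_lt_of_ne_zero hκ' fun hu hv => ?_
    have hdepth : t.depth (t.par u) + t.depth (t.par v) < N := by
      rw [← hN, t.depth_par hu, t.depth_par hv]; omega
    rw [hκ.lt_iff u v hu hv, hκ'.lt_iff u v hu hv]
    exact toLex_lt_toLex_congr (ih _ hdepth _ _ rfl) (ih _ (by rwa [add_comm]) _ _ rfl) u v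

theorem IsBFSOrder.rankBy_eq (hκ : t.IsBFSOrder κ) : rankBy κ = t.rank :=
  rankBy_congr (hκ.lt_iff_lt isBFSOrder_bfsKey)

end IsBFSOrder

noncomputable def code (i : Fin n) : ℕ := t.bfsRank (t.par i.succ)

theorem code_eq (i : Fin n) : t.code i = t.rank (t.par i.succ) + 1 :=
  t.bfsRank_eq_rank_add_one _

theorem isParkingFun_code : IsParkingFun n t.code := by
  refine ⟨fun i => ?_, fun a ha => ?_⟩
  · have := t.rank_par_lt i.succ_ne_zero
    have := t.rank_lt i.succ
    rw [code_eq, mem_Icc]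
    omega
  · rw [mem_Icc] at ha
    have hcard : #{v | t.rank v < a + 1} = a + 1 :=
      card_filter_rankBy_lt t.bfsKey_injective (by simp only [Fintype.card_fin]; omega)
    have hsub : ({v | t.rank v < a + 1} : Finset _) ⊆
        insert 0 (({j | t.code j ≤ a} : Finset _).map (Fin.succEmb n)) := by
      intro v hv
      rcases Fin.eq_zero_or_eq_succ v with rfl | ⟨j, rfl⟩
      · exact mem_insert_self _ _
      · refine mem_insert_of_mem (mem_map_of_mem (Fin.succEmb n) ?_)
        simp only [mem_filter, mem_univ, true_and] at hv ⊢
        have := t.rank_par_lt j.succ_ne_zero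
        rw [code_eq]
        omega
    have := (card_le_card hsub).trans (card_insert_le _ _)
    rw [hcard, card_map] at this
    omega

theorem rank_eq_of_rank_par_eq {t t' : CayleyTree n}
    (h : ∀ v, v ≠ 0 → t.rank (t.par v) = t'.rank (t'.par v)) : t.rank = t'.rank := by
  have hlt (u v : Fin (n + 1)) : t.rank u < t.rank v ↔ t'.rank u < t'.rank v :=
    isBFSOrder_rank.lt_iff_lt_of_ne_zero isBFSOrder_rank fun hu hv => by
      rw [isBFSOrder_rank.lt_iff u v hu hv, isBFSOrder_rank.lt_iff u v hu hv, h u hu, h v hv]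
  exact rankBy_congr fun u v => by rw [← rank_lt_rank_iff, ← rank_lt_rank_iff, hlt]

theorem code_injective : Function.Injective (code (n := n)) := by
  intro t t' h
  have hpar (v : Fin (n + 1)) (hv : v ≠ 0) : t.rank (t.par v) = t'.rank (t'.par v) := by
    simpa [code_eq] using congrFun h (v.pred hv)
  have hrank := rank_eq_of_rank_par_eq hpar
  refine ext (funext fun v => ?_)
  rcases eq_or_ne v 0 with rfl | hv
  · rw [t.par_root, t'.par_root]
  · exact t.rank_injective (by rw [hpar v hv, hrank])

end CayleyTree

section OfParkingFun

variable {n : ℕ} {f : Fin n → ℕ}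

theorem IsParkingFun.one_le_apply (hf : IsParkingFun n f) (i : Fin n) : 1 ≤ f i :=
  (mem_Icc.1 (hf.1 i)).1

theorem IsParkingFun.apply_le (hf : IsParkingFun n f) (i : Fin n) : f i ≤ n :=
  (mem_Icc.1 (hf.1 i)).2

def parkKey (f : Fin n → ℕ) : Fin (n + 1) → WithBot (ℕ ×ₗ Fin n) :=
  Fin.cases ⊥ fun i => ↑(toLex (f i, i) : ℕ ×ₗ Fin n)

theorem parkKey_injective : Function.Injective (parkKey f) := by
  intro u v h
  cases u using Fin.cases <;> cases v using Fin.cases <;> simp_all [parkKey]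

def parkRank (f : Fin n → ℕ) : Fin (n + 1) → ℕ := rankBy (parkKey f)

theorem parkRank_lt_parkRank_iff {u v : Fin (n + 1)} :
    parkRank f u < parkRank f v ↔ parkKey f u < parkKey f v :=
  rankBy_lt_rankBy_iff

theorem parkRank_succ (i : Fin n) :
    parkRank f i.succ = #{j | toLex (f j, j) < toLex (f i, i)} + 1 := by
  rw [parkRank, rankBy, Fin.card_filter_univ_succ]
  simp [parkKey]

theorem IsParkingFun.le_parkRank_succ (hf : IsParkingFun n f) (i : Fin n) :
    f i ≤ parkRank f i.succ := by
  rw [parkRank_succ]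
  by_cases hfi : f i ≤ 1
  · omega
  have hbelow := hf.2 (f i - 1) (mem_Icc.2 ⟨by omega, by have := hf.apply_le i; omega⟩)
  have hmono : #{j | f j ≤ f i - 1} ≤ #{j | toLex (f j, j) < toLex (f i, i)} :=
    card_le_card fun j hj => by
      simp only [mem_filter, mem_univ, true_and] at hj ⊢
      exact Prod.Lex.toLex_lt_toLex.2 (Or.inl (by omega))
  omega

noncomputable def parkPar (f : Fin n → ℕ) : Fin (n + 1) → Fin (n + 1) :=
  Fin.cases 0 fun i => Function.invFun (parkRank f) (f i - 1)

theorem IsParkingFun.parkRank_parkPar_succ (hf : IsParkingFun n f) (i : Fin n) :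
    parkRank f (parkPar f i.succ) = f i - 1 := by
  have hk : f i - 1 < Fintype.card (Fin (n + 1)) := by
    have := hf.apply_le i
    simp only [Fintype.card_fin]
    omega
  exact Function.invFun_eq (exists_rankBy_eq parkKey_injective hk)

namespace CayleyTree

noncomputable def ofParkingFun (hf : IsParkingFun n f) : CayleyTree n where
  par := parkPar f
  par_root := rfl
  reach := Function.exists_iterate_eq_of_lt (parkRank f) fun v hv => by
    obtain ⟨i, rfl⟩ := Fin.exists_succ_eq.2 hv
    have := hf.le_parkRank_succ i
    have := hf.one_le_apply i
    rw [hf.parkRank_parkPar_succ]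
    omega

theorem ofParkingFun_par (hf : IsParkingFun n f) : (ofParkingFun hf).par = parkPar f := rfl

theorem isBFSOrder_parkKey (hf : IsParkingFun n f) :
    (ofParkingFun hf).IsBFSOrder (parkKey f) where
  zero_lt v hv := by
    obtain ⟨i, rfl⟩ := Fin.exists_succ_eq.2 hv
    exact WithBot.bot_lt_coe _
  lt_iff u v hu hv := by
    obtain ⟨i, rfl⟩ := Fin.exists_succ_eq.2 hu
    obtain ⟨j, rfl⟩ := Fin.exists_succ_eq.2 hv
    have := hf.one_le_apply i
    have := hf.one_le_apply j
    rw [ofParkingFun_par, ← toLex_lt_toLex_congr parkRank_lt_parkRank_iff parkRank_lt_parkRank_iff]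
    simp only [hf.parkRank_parkPar_succ, parkKey, Fin.cases_succ, WithBot.coe_lt_coe,
      Prod.Lex.toLex_lt_toLex, Fin.succ_lt_succ_iff]
    omega

theorem rank_ofParkingFun (hf : IsParkingFun n f) : (ofParkingFun hf).rank = parkRank f :=
  (isBFSOrder_parkKey hf).rankBy_eq.symm

theorem code_ofParkingFun (hf : IsParkingFun n f) : (ofParkingFun hf).code = f := by
  funext i
  have := hf.one_le_apply i
  rw [code_eq, rank_ofParkingFun, ofParkingFun_par, hf.parkRank_parkPar_succ]
  omega

end CayleyTree

end OfParkingFun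

theorem cayleyTree_bfs_parking_bijection_general (n : ℕ) :
    Set.BijOn (fun (t : CayleyTree n) => fun i : Fin n => t.bfsRank (t.par i.succ))
      Set.univ {f : Fin n → ℕ | IsParkingFun n f} :=
  ⟨fun t _ => t.isParkingFun_code, fun _ _ _ _ h => CayleyTree.code_injective h,
    fun _ hf => ⟨CayleyTree.ofParkingFun hf, trivial, CayleyTree.code_ofParkingFun hf⟩⟩

/-- Chassaing–Marckert bijection: the map sending a rooted Cayley tree `t` on
`{0,…,n}` to `(r(1,t),…,r(n,t))`, where `r(i,t)` is the breadth-first-search rank of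
the parent of the vertex labeled `i`, is a bijection onto the set of parking functions
of size `n`. -/
theorem cayleyTree_bfs_parking_bijection (n : ℕ) (hn : 1 ≤ n) :
    Set.BijOn (fun (t : CayleyTree n) => fun i : Fin n => t.bfsRank (t.par i.succ))
      Set.univ {f : Fin n → ℕ | IsParkingFun n f} :=
  cayleyTree_bfs_parking_bijection_general n
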